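/- If a sequence Δ_t ∈ [0,1] satisfies E[Δ_t] ≤ c·sqrt(n·log t/(t·η_t)) + exp(−t·η_t/8) + exp(−t·η_t/(16n)) for t ≥ 4e, and η_t = t^(−1/3)·(n·log t)^((1+2ε)/3) with ε ∈ (0,1/2), then E[Δ_t] ≤ C·t^(−1/3)·(n·log t)^((1−ε)/3) for all t ≥ 4e, where C = 2·(1 + sqrt(2/e) + sqrt(1/e))·max(c,1). -/

import Mathlib

open Real

lemma aux_exp14 (a v : ℝ) (ha : 0 < a) (hv : 0 < v) :
    Real.exp (-(v / a)) * Real.sqrt v ≤ Real.sqrt (a / (2 * Real.exp 1)) := by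
  have e2 : Real.exp (-(2 * v / a)) = Real.exp (-(v / a)) * Real.exp (-(v / a)) := by
    rw [← Real.exp_add]; ring_nf
  have h1 : Real.exp (-(v / a)) * Real.sqrt v
      = Real.sqrt (Real.exp (-(2 * v / a)) * v) := by
    rw [e2, Real.sqrt_mul (by positivity), Real.sqrt_mul_self (Real.exp_nonneg _)]
  have hE : 0 < Real.exp (2 * v / a) := Real.exp_pos _
  have keyA : 2 * v / a ≤ Real.exp (2 * v / a) / Real.exp 1 := by
    have h := Real.add_one_le_exp (2 * v / a - 1)
    have h2 : Real.exp (2 * v / a - 1) = Real.exp (2 * v / a) / Real.exp 1 := by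
      rw [Real.exp_sub]
    linarith [h, h2.ge, h2.le]
  have key2 : 2 * v * Real.exp 1 ≤ a * Real.exp (2 * v / a) := by
    rw [div_le_div_iff₀ ha (Real.exp_pos 1)] at keyA
    linarith
  have h2 : Real.exp (-(2 * v / a)) * v ≤ a / (2 * Real.exp 1) := by
    rw [Real.exp_neg, inv_mul_eq_div, div_le_div_iff₀ hE (by positivity)]
    linarith
  calc Real.exp (-(v / a)) * Real.sqrt v = Real.sqrt (Real.exp (-(2 * v / a)) * v) := h1
    _ ≤ Real.sqrt (a / (2 * Real.exp 1)) := Real.sqrt_le_sqrt h2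

/-- If `D t` (standing for `E[Δ_t] ∈ [0,1]`) satisfies
`D t ≤ c·sqrt(n·log t/(t·η t)) + exp(−t·η t/8) + exp(−t·η t/(16n))` for `t ≥ 4e`,
with `η t = t^(−1/3)·(n·log t)^((1+2ε)/3)` and `ε ∈ (0,1/2)`, then
`D t ≤ C·t^(−1/3)·(n·log t)^((1−ε)/3)` for all `t ≥ 4e`, where
`C = 2·(1 + sqrt(2/e) + sqrt(1/e))·max(c,1)`. -/
theorem stmt_14 (D η : ℕ → ℝ) (c n ε : ℝ) (hc : 0 < c) (hn : 1 ≤ n)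
    (hε0 : 0 < ε) (hε1 : ε < 1 / 2)
    (hD01 : ∀ t, 0 ≤ D t ∧ D t ≤ 1)
    (hη : ∀ t : ℕ, 4 * exp 1 ≤ (t : ℝ) →
      η t = (t : ℝ) ^ (-(1 / 3) : ℝ) * (n * log t) ^ ((1 + 2 * ε) / 3))
    (hbound : ∀ t : ℕ, 4 * exp 1 ≤ (t : ℝ) →
      D t ≤ c * Real.sqrt (n * log t / ((t : ℝ) * η t))
        + exp (-((t : ℝ) * η t) / 8) + exp (-((t : ℝ) * η t) / (16 * n))) :
    ∀ t : ℕ, 4 * exp 1 ≤ (t : ℝ) →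
      D t ≤ (2 * (1 + Real.sqrt (2 / exp 1) + Real.sqrt (1 / exp 1)) * max c 1)
        * (t : ℝ) ^ (-(1 / 3) : ℝ) * (n * log t) ^ ((1 - ε) / 3) := by
  intro t ht
  have hbd := hbound t ht
  have hηt := hη t ht
  have hT0 : (0:ℝ) < (t : ℝ) := lt_of_lt_of_le (by positivity) ht
  set T : ℝ := (t : ℝ) with hTdef
  have hL : 1 ≤ Real.log T := by
    rw [Real.le_log_iff_exp_le hT0]
    nlinarith [Real.exp_pos 1]
  set P : ℝ := n * Real.log T with hPdef
  have hP1 : 1 ≤ P := by nlinarith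
  have hP0 : 0 < P := lt_of_lt_of_le one_pos hP1
  have hnP : n ≤ P := by nlinarith
  set u : ℝ := T * η t with hudef
  have hTT : T * T ^ (-(1/3):ℝ) = T ^ ((2:ℝ)/3) := by
    have h := Real.rpow_add hT0 1 (-(1/3))
    rw [Real.rpow_one] at h
    rw [← h]
    norm_num
  have hu : u = T ^ ((2:ℝ)/3) * P ^ ((1 + 2*ε)/3) := by
    rw [hudef, hηt, ← mul_assoc, hTT]
  have hu0 : 0 < u := by rw [hu]; positivity
  set B : ℝ := T ^ (-(1/3):ℝ) * P ^ ((1-ε)/3) with hBdef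
  have hB0 : 0 < B := by rw [hBdef]; positivity
  have huB : u * B ^ 2 = P := by
    rw [hu, hBdef, mul_pow]
    have e1 : (T ^ (-(1/3):ℝ))^2 = T ^ (-((2:ℝ)/3)) := by
      rw [← Real.rpow_natCast (T ^ (-(1/3):ℝ)) 2, ← Real.rpow_mul hT0.le]
      norm_num
    have e2 : (P ^ ((1-ε)/3))^2 = P ^ ((2-2*ε)/3) := by
      rw [← Real.rpow_natCast (P ^ ((1-ε)/3)) 2, ← Real.rpow_mul hP0.le]
      congr 1
      push_cast; ring
    rw [e1, e2, mul_mul_mul_comm, ← Real.rpow_add hT0, ← Real.rpow_add hP0,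
      show (2:ℝ)/3 + -(2/3) = 0 by norm_num,
      show (1+2*ε)/3 + (2-2*ε)/3 = 1 by ring, Real.rpow_zero, Real.rpow_one, one_mul]
  have hsu0 : 0 < Real.sqrt u := Real.sqrt_pos.mpr hu0
  have h1 : Real.sqrt (P / u) = B := by
    have hPu : P / u = B ^ 2 := by
      rw [← huB, mul_comm, mul_div_assoc, div_self hu0.ne', mul_one]
    rw [hPu, Real.sqrt_sq hB0.le]
  have h2 : Real.sqrt u * B = Real.sqrt P := by
    rw [← huB, Real.sqrt_mul hu0.le, Real.sqrt_sq hB0.le]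
  have hsP1 : 1 ≤ Real.sqrt P := by
    rw [show (1:ℝ) = Real.sqrt 1 by simp]
    exact Real.sqrt_le_sqrt hP1
  have hsn : Real.sqrt n ≤ Real.sqrt P := Real.sqrt_le_sqrt hnP
  -- bound on the first exponential
  have hb2 : Real.exp (-u / 8) ≤ 2 * Real.sqrt (1 / Real.exp 1) * B := by
    have ha := aux_exp14 8 u (by norm_num) hu0
    have hs : Real.sqrt ((8:ℝ) / (2 * Real.exp 1)) = 2 * Real.sqrt (1 / Real.exp 1) := by
      rw [show (8:ℝ)/(2*Real.exp 1) = 2^2 * (1/Real.exp 1) by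
            field_simp; ring,
        Real.sqrt_mul (by norm_num), Real.sqrt_sq (by norm_num)]
    rw [← mul_le_mul_iff_of_pos_right hsu0, mul_assoc, mul_comm B, h2, neg_div]
    calc Real.exp (-(u/8)) * Real.sqrt u ≤ 2 * Real.sqrt (1 / Real.exp 1) := by
          rw [← hs]; exact ha
      _ = 2 * Real.sqrt (1 / Real.exp 1) * 1 := (mul_one _).symm
      _ ≤ 2 * Real.sqrt (1 / Real.exp 1) * Real.sqrt P := by
          gcongr
  -- bound on the second exponential
  have hb3 : Real.exp (-u / (16 * n)) ≤ 2 * Real.sqrt (2 / Real.exp 1) * B := by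
    have hn0 : (0:ℝ) < 16 * n := by linarith
    have ha := aux_exp14 (16 * n) u hn0 hu0
    have hs : Real.sqrt ((16*n) / (2 * Real.exp 1))
        = 2 * (Real.sqrt (2 / Real.exp 1) * Real.sqrt n) := by
      rw [show (16*n)/(2*Real.exp 1) = 2^2 * (2/Real.exp 1 * n) by
            field_simp; ring,
        Real.sqrt_mul (by norm_num), Real.sqrt_sq (by norm_num),
        Real.sqrt_mul (by positivity)]
    rw [← mul_le_mul_iff_of_pos_right hsu0, mul_assoc, mul_comm B, h2, neg_div]
    calc Real.exp (-(u/(16*n))) * Real.sqrt u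
        ≤ 2 * (Real.sqrt (2 / Real.exp 1) * Real.sqrt n) := by rw [← hs]; exact ha
      _ ≤ 2 * (Real.sqrt (2 / Real.exp 1) * Real.sqrt P) := by
          gcongr
      _ = 2 * Real.sqrt (2 / Real.exp 1) * Real.sqrt P := by ring
  rw [h1] at hbd
  have hM1 : (1:ℝ) ≤ max c 1 := le_max_right c 1
  have hMc : c ≤ max c 1 := le_max_left c 1
  have hcoef : c + 2 * Real.sqrt (1 / Real.exp 1) + 2 * Real.sqrt (2 / Real.exp 1)
      ≤ 2 * (1 + Real.sqrt (2 / exp 1) + Real.sqrt (1 / exp 1)) * max c 1 := by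
    nlinarith [mul_nonneg (Real.sqrt_nonneg (1 / Real.exp 1)) (sub_nonneg.mpr hM1),
      mul_nonneg (Real.sqrt_nonneg (2 / Real.exp 1)) (sub_nonneg.mpr hM1)]
  have hfin : D t ≤ (c + 2 * Real.sqrt (1 / Real.exp 1) + 2 * Real.sqrt (2 / Real.exp 1)) * B := by
    calc D t ≤ c * B + Real.exp (-u / 8) + Real.exp (-u / (16 * n)) := hbd
      _ ≤ c * B + 2 * Real.sqrt (1 / Real.exp 1) * B + 2 * Real.sqrt (2 / Real.exp 1) * B := by
          gcongr
      _ = (c + 2 * Real.sqrt (1 / Real.exp 1) + 2 * Real.sqrt (2 / Real.exp 1)) * B := by ring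
  calc D t ≤ (c + 2 * Real.sqrt (1 / Real.exp 1) + 2 * Real.sqrt (2 / Real.exp 1)) * B := hfin
    _ ≤ (2 * (1 + Real.sqrt (2 / exp 1) + Real.sqrt (1 / exp 1)) * max c 1) * B :=
        mul_le_mul_of_nonneg_right hcoef hB0.le
    _ = (2 * (1 + Real.sqrt (2 / exp 1) + Real.sqrt (1 / exp 1)) * max c 1)
        * T ^ (-(1 / 3) : ℝ) * P ^ ((1 - ε) / 3) := by rw [hBdef]; ring
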